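/- Consider the on-ramp state equation x^k = x^0 + T_s·∑_{j=0}^{k−1}(λ^j − u^j) with λ^j ≥ 0 for all j. If a control sequence (u^j) satisfies the constraint u^k + (v/ℓ)·T_s·∑_{j=0}^{k−1} u^j ≤ (v/ℓ)·x^0 for every k (i.e., it is feasible for the zero-inflow problem), then it also satisfies u^k ≤ (v/ℓ)·x^k for every k when the nonzero inflows λ^j are applied. -/
import Mathlib


/-- Feasibility preservation for the zero-inflow optimal control: a control
sequence feasible for the zero-inflow on-ramp demand constraint remains feasible
under any nonnegative exogenous inflow sequence. -/
theorem zero_inflow_feasibility_preserved (Ts v ℓ x0 : ℝ) (lam u x : ℕ → ℝ)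
    (hTs : 0 < Ts) (hv : 0 < v) (hℓ : 0 < ℓ)
    (hlam : ∀ j, 0 ≤ lam j)
    (hx : ∀ k, x k = x0 + Ts * ∑ j ∈ Finset.range k, (lam j - u j))
    (hfeas : ∀ k, u k + (v / ℓ) * Ts * ∑ j ∈ Finset.range k, u j ≤ (v / ℓ) * x0) :
    ∀ k, u k ≤ (v / ℓ) * x k := by
  intro k
  have hvl : 0 ≤ v / ℓ := le_of_lt (div_pos hv hℓ)
  have hs : 0 ≤ ∑ j ∈ Finset.range k, lam j :=
    Finset.sum_nonneg fun j _ => hlam j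
  have := hfeas k
  rw [hx k, Finset.sum_sub_distrib]
  nlinarith [mul_nonneg (mul_nonneg hvl hTs.le) hs]
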